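/- arXiv:1410.6174 — 2 statements merged into one kernel-verified Lean document; each statement's English description precedes it below -/
import Mathlib

section
/- For every integer k ≥ 2, every r ∈ {1, …, k−1}, every τ in the upper half-plane and every u ∈ ℂ, one has ĥ_{k,r}(τ; u) + e^{−πiku − πikτ/2} · ĥ_{k,k−r}(τ; u+τ) = 2 e^{−πiru − πir²τ/(2k)}. Moreover ĥ_{k,r}(τ; u) = ĥ_{k,r}(τ; −u) for all u ∈ ℂ. -/
noncomputable section

open Complex MeasureTheory Matrix

namespace DSLST

/-- Dedekind eta function. -/
def eta (τ : ℂ) : ℂ :=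
  Complex.exp (2 * (Real.pi : ℂ) * Complex.I * τ / 24) *
    ∏' n : ℕ, (1 - Complex.exp (2 * (Real.pi : ℂ) * Complex.I * τ * ((n : ℂ) + 1)))

/-- Jacobi theta function θ_{ab}(τ; z). -/
def theta (a b : ℤ) (τ z : ℂ) : ℂ :=
  ∑' n : ℤ, Complex.exp ((Real.pi : ℂ) * Complex.I * τ * ((n : ℂ) + (a : ℂ) / 2) ^ 2
    + 2 * (Real.pi : ℂ) * Complex.I * (z + (b : ℂ) / 2) * ((n : ℂ) + (a : ℂ) / 2))

/-- Level-k theta ϑ_{k,r}(τ; z). -/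
def thetaLvl (k r : ℤ) (τ z : ℂ) : ℂ :=
  ∑' n : ℤ, Complex.exp
    (2 * (Real.pi : ℂ) * Complex.I * τ * ((r : ℂ) + 2 * (k : ℂ) * (n : ℂ)) ^ 2 / (4 * (k : ℂ))
      + 2 * (Real.pi : ℂ) * Complex.I * z * ((r : ℂ) + 2 * (k : ℂ) * (n : ℂ)))

/-- ϑ̂_{k,r} = ϑ_{k,r} − ϑ_{k,−r}. -/
def thetaHat (k r : ℤ) (τ z : ℂ) : ℂ := thetaLvl k r τ z - thetaLvl k (-r) τ z

/-- Affine SU(2) character at level k−2: χ^{(k−2)}_{l−1}(τ; z) = i ϑ̂_{k,l}(τ; z/2)/θ₁₁(τ; z). -/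
def chi (k l : ℤ) (τ z : ℂ) : ℂ :=
  Complex.I * thetaHat k l τ (z / 2) / theta 1 1 τ z

/-- N=2 minimal model character C^{m,k}_r[0,0]. -/
def C00 (k m r : ℤ) (τ z : ℂ) : ℂ :=
  if (m - r) % 2 = 0 then
    Complex.I *
      Complex.exp (2 * (Real.pi : ℂ) * Complex.I * τ *
        (((m : ℂ) + 1) ^ 2 - (r : ℂ) ^ 2 - (k : ℂ) ^ 2) / (4 * (k : ℂ))) *
      Complex.exp (2 * (Real.pi : ℂ) * Complex.I * z * (r : ℂ) / (k : ℂ)) *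
      theta 0 0 τ z * theta 1 1 ((k : ℂ) * τ) (((m : ℂ) + 1) * τ) * eta ((k : ℂ) * τ) ^ 3 /
      (theta 1 0 ((k : ℂ) * τ) (z - ((m : ℂ) + 1 + (r : ℂ)) * τ / 2) *
        theta 1 0 ((k : ℂ) * τ) (z + ((m : ℂ) + 1 - (r : ℂ)) * τ / 2) * eta τ ^ 3)
  else 0

/-- N=2 minimal model character C^{m,k}_r[1,1]. -/
def C11 (k m r : ℤ) (τ z : ℂ) : ℂ :=
  - Complex.exp (2 * (Real.pi : ℂ) * Complex.I * τ * (-((k : ℂ) - 2)) / (8 * (k : ℂ))) *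
    Complex.exp (2 * (Real.pi : ℂ) * Complex.I * (z + τ / 2 + 1 / 2) * ((k : ℂ) - 2) / (2 * (k : ℂ))) *
    Complex.exp (-(Real.pi : ℂ) * Complex.I * (r : ℂ) / (k : ℂ)) *
    C00 k m (r + 1) τ (z + τ / 2 + 1 / 2)

/-- Multivariable Appell–Lerch sum μ^{k,j,j'}(τ; v, u, w). -/
def mu (k j j' : ℤ) (τ v u w : ℂ) : ℂ :=
  Complex.exp (2 * (Real.pi : ℂ) * Complex.I * v * (j' : ℂ) / (k : ℂ)) / theta 1 1 τ u *
    ∑' n : ℤ,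
      Complex.exp (2 * (Real.pi : ℂ) * Complex.I * τ * ((n : ℂ) ^ 2 + (j' : ℂ) * (n : ℂ)) / (k : ℂ)) /
          (1 - Complex.exp (2 * (Real.pi : ℂ) * Complex.I * (v + (n : ℂ) * τ))) *
        Complex.exp (2 * (Real.pi : ℂ) * Complex.I * (n : ℂ) *
          (u + (1 - 2 / (k : ℂ)) * w - (1 - 2 / (k : ℂ)) * v)) *
        C11 k (j - 1) (2 * n + j') τ (w - v)

/-- Membership in the lattice ℤτ + ℤ. -/
def inLat (τ z : ℂ) : Prop := ∃ m n : ℤ, z = (m : ℂ) * τ + (n : ℂ)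

/-- Ŝ^{(k)}_{r,r'} = √(2/k)·sin(πrr'/k). -/
def Shat (k r r' : ℤ) : ℂ :=
  ((Real.sqrt (2 / (k : ℝ)) * Real.sin (Real.pi * (r : ℝ) * (r' : ℝ) / (k : ℝ)) : ℝ) : ℂ)

/-- ĥ_{k,r}(τ; u). -/
def hhat (k r : ℤ) (τ u : ℂ) : ℂ :=
  Complex.I * ∫ x : ℝ,
    Complex.exp ((Real.pi : ℂ) * Complex.I * (k : ℂ) * τ * (x : ℂ) ^ 2 / 2) *
      Complex.exp (-(Real.pi : ℂ) * (k : ℂ) * u * (x : ℂ)) *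
      (1 / (1 - Complex.exp ((Real.pi : ℂ) * (x : ℂ) - (Real.pi : ℂ) * Complex.I * (r : ℂ) / (k : ℂ))) -
        1 / (1 - Complex.exp ((Real.pi : ℂ) * (x : ℂ) + (Real.pi : ℂ) * Complex.I * (r : ℂ) / (k : ℂ))))

/-- E(z) = 2∫₀^z e^{−πt²}dt. -/
def Efun (z : ℝ) : ℝ := 2 * ∫ t in (0 : ℝ)..z, Real.exp (-Real.pi * t ^ 2)

/-- A single term of the R̂ series. -/
def Rterm (k : ℤ) (τ u : ℂ) (n : ℤ) : ℂ :=
  ((Real.sign ((n : ℝ) + 1 / 2) -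
      Efun (((n : ℝ) + (k : ℝ) * u.im / τ.im) * Real.sqrt (τ.im / (k : ℝ))) : ℝ) : ℂ) *
    Complex.exp (-(Real.pi : ℂ) * Complex.I * (n : ℂ) ^ 2 * τ / (2 * (k : ℂ))
      - (Real.pi : ℂ) * Complex.I * (n : ℂ) * u)

/-- R̂_{k,r}(τ; u). -/
def Rhat (k r : ℤ) (τ u : ℂ) : ℂ :=
  (∑' m : ℤ, Rterm k τ u (r + 2 * k * m)) - ∑' m : ℤ, Rterm k τ u (-r + 2 * k * m)

/-- Wirtinger derivative ∂/∂ū. -/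
def dzbar (f : ℂ → ℂ) (u : ℂ) : ℂ :=
  (1 / 2) * ((fderiv ℝ f u) 1 + Complex.I * (fderiv ℝ f u) Complex.I)

/-- Ω^{(k,d)}_{r,r'}. -/
def Omega (k d r r' : ℤ) : ℂ :=
  if (r + r') % (2 * d) = 0 ∧ (r - r') % (2 * k / d) = 0 then 1 else 0

/-- Ω̂^{(k,d)}_{r,r'} = Ω^{(k,d)}_{r,r'} − Ω^{(k,d)}_{r,−r'}. -/
def OmegaHat (k d r r' : ℤ) : ℂ := Omega k d r r' - Omega k d r (-r')

/-- Completion μ̃^{k,j,j'}. -/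
def mutilde (k j j' : ℤ) (τ v u w : ℂ) : ℂ :=
  (1 / 2) * (mu k j j' τ v u w + mu k (k - j) (k - j') τ v u w) -
    (1 / 4) * (if (j - j') % 2 = 0 then (1 : ℂ) else 0) *
      (chi k j τ (u - v + w) * Rhat k j' τ (u - v + (1 - 2 / (k : ℂ)) * w) +
        chi k (k - j) τ (u - v + w) * Rhat k (k - j') τ (u - v + (1 - 2 / (k : ℂ)) * w))

/-- μ^{(k,d)} = Σ Ω̂ μ. -/
def muKD (k d : ℤ) (τ v u w : ℂ) : ℂ :=
  ∑ j ∈ Finset.Icc (1 : ℤ) (k - 1), ∑ j' ∈ Finset.Icc (1 : ℤ) (k - 1),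
    OmegaHat k d j j' * mu k j j' τ v u w

/-- μ̃^{(k,d)} = Σ Ω̂ μ̃. -/
def mutildeKD (k d : ℤ) (τ v u w : ℂ) : ℂ :=
  ∑ j ∈ Finset.Icc (1 : ℤ) (k - 1), ∑ j' ∈ Finset.Icc (1 : ℤ) (k - 1),
    OmegaHat k d j j' * mutilde k j j' τ v u w

/-- Weak Jacobi form φ_{−2,1}. -/
def phiM21 (τ z : ℂ) : ℂ := -(theta 1 1 τ z ^ 2) / eta τ ^ 6

/-- Weak Jacobi form φ_{0,1}. -/
def phi01 (τ z : ℂ) : ℂ :=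
  4 * (theta 1 0 τ z ^ 2 / theta 1 0 τ 0 ^ 2 + theta 0 0 τ z ^ 2 / theta 0 0 τ 0 ^ 2 +
    theta 0 1 τ z ^ 2 / theta 0 1 τ 0 ^ 2)

/-- B^{k,j,j'}_{ab}(τ; v,u,w). -/
def Bfun (k j j' a b : ℤ) (τ v u w : ℂ) : ℂ :=
  theta a b τ v * theta a b τ u / eta τ ^ 3 *
    mu k j j' τ (v + ((a : ℂ) - 1) * τ / 2 + ((b : ℂ) - 1) / 2)
      (u + ((a : ℂ) - 1) * τ / 2 + ((b : ℂ) - 1) / 2) w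

/-- B_{(k,d)}(τ; u). -/
def Bkd (k d : ℤ) (τ u : ℂ) : ℂ :=
  (1 / 2) * ((Real.sqrt ((k : ℝ) * τ.im) : ℝ) : ℂ) *
    Complex.exp (-(Real.pi : ℂ) * (k : ℂ) * (u.im : ℂ) ^ 2 / (τ.im : ℂ)) *
    ∑ r ∈ Finset.range (2 * k).toNat, ∑ r' ∈ Finset.range (2 * k).toNat,
      thetaHat k (r : ℤ) τ (u / 2) * (starRingEnd ℂ) (thetaHat k (r' : ℤ) τ (u / 2)) *
        Omega k d (r : ℤ) (r' : ℤ)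

/-- Fundamental domain {aτ + b : a, b ∈ [0,1)} of the torus E(τ). -/
def fundDom (τ : ℂ) : Set ℂ :=
  {z : ℂ | ∃ a b : ℝ, a ∈ Set.Ico (0 : ℝ) 1 ∧ b ∈ Set.Ico (0 : ℝ) 1 ∧ z = (a : ℂ) * τ + (b : ℂ)}

/-- ∫_{E(τ)} B_{(k,d)}(τ; u) du₁du₂/τ₂. -/
def torusInt (k d : ℤ) (τ : ℂ) : ℂ :=
  (1 / (τ.im : ℂ)) * ∫ u in fundDom τ, Bkd k d τ u

/-- The matrix S^{(k)} with indices in ℤ/2kℤ (represented by Fin (2k)). -/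
def Smat (k : ℕ) : Matrix (Fin (2 * k)) (Fin (2 * k)) ℂ :=
  Matrix.of fun r r' => (1 / ((Real.sqrt (2 * (k : ℝ)) : ℝ) : ℂ)) *
    Complex.exp (-(Real.pi : ℂ) * Complex.I * ((r : ℕ) : ℂ) * ((r' : ℕ) : ℂ) / (k : ℂ))

/-- The matrix T^{(k)}. -/
def Tmat (k : ℕ) : Matrix (Fin (2 * k)) (Fin (2 * k)) ℂ :=
  Matrix.of fun r r' => if r = r' then
    Complex.exp ((Real.pi : ℂ) * Complex.I * ((r : ℕ) : ℂ) ^ 2 / (2 * (k : ℂ))) else 0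

/-- The matrix Ω^{(k,d)}. -/
def OmatBig (k d : ℕ) : Matrix (Fin (2 * k)) (Fin (2 * k)) ℂ :=
  Matrix.of fun r r' => Omega (k : ℤ) (d : ℤ) ((r : ℕ) : ℤ) ((r' : ℕ) : ℤ)

/-- The matrix Ŝ^{(k)} on indices {1,…,k−1}. -/
def ShatMat (k : ℕ) : Matrix (Fin (k - 1)) (Fin (k - 1)) ℂ :=
  Matrix.of fun l l' => Shat (k : ℤ) (((l : ℕ) : ℤ) + 1) (((l' : ℕ) : ℤ) + 1)

/-- The matrix Ω̂^{(k,d)} on indices {1,…,k−1}. -/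
def OmatHat (k d : ℕ) : Matrix (Fin (k - 1)) (Fin (k - 1)) ℂ :=
  Matrix.of fun r r' => OmegaHat (k : ℤ) (d : ℤ) (((r : ℕ) : ℤ) + 1) (((r' : ℕ) : ℤ) + 1)

end DSLST

/-!
Put `β = πikτ/2`, `γ = -πku`, `θ = πr/k` and
`F(z) = e^{βz² + γz} (1/(1 - e^{πz - iθ}) - 1/(1 - e^{πz + iθ}))`. Then `ĥ_{k,r}(τ; u)` is
`i ∫_ℝ F(x) dx` and the second term of the shift identity is `-i ∫_ℝ F(x + i) dx`, so the identity
is the residue theorem `∫ F(x) dx - ∫ F(x + i) dx = -2i e^{βz₀² + γz₀}` for the strip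
`0 ≤ Im z ≤ 1`, in which `F` has a single simple pole, at `z₀ = iθ/π`.

On the rectangle `[-X, X] × [0, 1]`, `F - e^{βz₀² + γz₀}/(1 - e^{πz - iθ})` is holomorphic, so the
boundary integral of `F` is `e^{βz₀² + γz₀}` times that of `1/(1 - e^{πz - iθ})`. The latter tends
to `-2i` as `X → ∞`: the difference of its horizontal sides has the primitive
`(log(1 + w) - log(1 - w))/π` with `w = e^{πx - iθ}`, and its vertical sides tend to `0` and `1`.
For `F` itself the Gaussian factor kills the vertical sides.

Evenness in `u` is the substitution `x ↦ -x`, which leaves the kernel invariant.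
-/

open Complex MeasureTheory Filter Topology Set intervalIntegral
open scoped Interval Real

namespace DSLST

def rectIntegral (f : ℂ → ℂ) (z w : ℂ) : ℂ :=
  (∫ x : ℝ in z.re..w.re, f (x + z.im * I)) - (∫ x : ℝ in z.re..w.re, f (x + w.im * I)) +
    I • (∫ y : ℝ in z.im..w.im, f (w.re + y * I)) - I • ∫ y : ℝ in z.im..w.im, f (z.re + y * I)

theorem rectIntegral_neg_add_I (f : ℂ → ℂ) (X : ℝ) :
    rectIntegral f (-X) (X + I) = (∫ x in -X..X, f x) - (∫ x in -X..X, f (x + I)) +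
      I • (∫ y in (0 : ℝ)..1, f (X + y * I)) - I • ∫ y in (0 : ℝ)..1, f ((-X : ℝ) + y * I) := by
  simp only [rectIntegral, neg_re, ofReal_re, add_re, I_re, add_zero, neg_im, ofReal_im, neg_zero,
    add_im, I_im, zero_add, ofReal_zero, zero_mul, ofReal_one, one_mul, ofReal_neg]

section Rectangle

variable {f g : ℂ → ℂ} {z w c : ℂ}

theorem rectIntegral_eq_zero (hf : DifferentiableOn ℂ f (Rectangle z w)) :
    rectIntegral f z w = 0 :=
  integral_boundary_rect_eq_zero_of_differentiableOn f z w hf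

theorem rectIntegral_const_mul (a : ℂ) :
    rectIntegral (fun ζ => a * f ζ) z w = a * rectIntegral f z w := by
  simp only [rectIntegral, intervalIntegral.integral_const_mul, smul_eq_mul]
  ring

variable (hc : c ∈ uIoo z.re w.re ×ℂ uIoo z.im w.im)
include hc

theorem horizontal_mem_rectangle_diff {x : ℝ} (hx : x ∈ [[z.re, w.re]]) :
    (x + z.im * I : ℂ) ∈ Rectangle z w \ {c} ∧ (x + w.im * I : ℂ) ∈ Rectangle z w \ {c} := by
  obtain ⟨-, hc⟩ := hc
  refine ⟨⟨by simp [Rectangle, mem_reProdIm, hx], ?_⟩, ⟨by simp [Rectangle, mem_reProdIm, hx], ?_⟩⟩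
  · rintro rfl; simp at hc
  · rintro rfl; simp at hc

theorem vertical_mem_rectangle_diff {y : ℝ} (hy : y ∈ [[z.im, w.im]]) :
    (w.re + y * I : ℂ) ∈ Rectangle z w \ {c} ∧ (z.re + y * I : ℂ) ∈ Rectangle z w \ {c} := by
  obtain ⟨hc, -⟩ := hc
  refine ⟨⟨by simp [Rectangle, mem_reProdIm, hy], ?_⟩, ⟨by simp [Rectangle, mem_reProdIm, hy], ?_⟩⟩
  · rintro rfl; simp at hc
  · rintro rfl; simp at hc

theorem rectIntegral_congr (hfg : EqOn f g (Rectangle z w \ {c})) :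
    rectIntegral f z w = rectIntegral g z w := by
  have hhor := fun x hx => horizontal_mem_rectangle_diff (z := z) (w := w) hc (x := x) hx
  have hver := fun y hy => vertical_mem_rectangle_diff (z := z) (w := w) hc (y := y) hy
  unfold rectIntegral
  rw [integral_congr fun x hx => hfg (hhor x hx).1, integral_congr fun x hx => hfg (hhor x hx).2,
    integral_congr fun y hy => hfg (hver y hy).1, integral_congr fun y hy => hfg (hver y hy).2]

theorem rectIntegral_sub (hf : ContinuousOn f (Rectangle z w \ {c}))
    (hg : ContinuousOn g (Rectangle z w \ {c})) :
    rectIntegral (fun ζ => f ζ - g ζ) z w = rectIntegral f z w - rectIntegral g z w := by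
  have hhor := fun x hx => horizontal_mem_rectangle_diff (z := z) (w := w) hc (x := x) hx
  have hver := fun y hy => vertical_mem_rectangle_diff (z := z) (w := w) hc (y := y) hy
  have side {h : ℂ → ℂ} (hcont : ContinuousOn h (Rectangle z w \ {c})) {a b : ℝ} {p : ℝ → ℂ}
      (hp : Continuous p) (hmaps : MapsTo p [[a, b]] (Rectangle z w \ {c})) :
      IntervalIntegrable (fun t => h (p t)) volume a b :=
    (hcont.comp hp.continuousOn hmaps).intervalIntegrable
  have hx (a : ℝ) : Continuous fun t : ℝ => (t + a * I : ℂ) := by fun_prop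
  have hy (a : ℝ) : Continuous fun t : ℝ => (a + t * I : ℂ) := by fun_prop
  unfold rectIntegral
  rw [integral_sub (side hf (hx _) fun x h => (hhor x h).1)
      (side hg (hx _) fun x h => (hhor x h).1),
    integral_sub (side hf (hx _) fun x h => (hhor x h).2) (side hg (hx _) fun x h => (hhor x h).2),
    integral_sub (side hf (hy _) fun y h => (hver y h).1) (side hg (hy _) fun y h => (hver y h).1),
    integral_sub (side hf (hy _) fun y h => (hver y h).2) (side hg (hy _) fun y h => (hver y h).2)]
  simp only [smul_eq_mul]
  ring

/-- `(g - g c) / φ` extends across the simple zero `c` of `φ` as the holomorphic function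
`dslope g c / dslope φ c`, whose boundary integral vanishes. -/
theorem rectIntegral_div_of_simple_zero {φ : ℂ → ℂ} (hg : Differentiable ℂ g)
    (hφ : Differentiable ℂ φ) (hφc : φ c = 0) (hφ'c : deriv φ c ≠ 0)
    (hφne : ∀ ζ ∈ Rectangle z w, ζ ≠ c → φ ζ ≠ 0) :
    rectIntegral (fun ζ => g ζ / φ ζ) z w = g c * rectIntegral (fun ζ => 1 / φ ζ) z w := by
  have hslope : ∀ ζ ∈ Rectangle z w, dslope φ c ζ ≠ 0 := by
    intro ζ hζ
    rcases eq_or_ne ζ c with rfl | hne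
    · rwa [dslope_same]
    · rw [dslope_of_ne _ hne, slope_def_field, hφc, sub_zero]
      exact div_ne_zero (hφne ζ hζ hne) (sub_ne_zero.2 hne)
  have hdslope {h : ℂ → ℂ} (hh : Differentiable ℂ h) :
      DifferentiableOn ℂ (dslope h c) (Rectangle z w) :=
    ((differentiableOn_dslope univ_mem).2 hh.differentiableOn).mono (subset_univ _)
  have hreg : DifferentiableOn ℂ (fun ζ => dslope g c ζ / dslope φ c ζ) (Rectangle z w) :=
    (hdslope hg).div (hdslope hφ) hslope
  have hquot {h : ℂ → ℂ} (hh : Differentiable ℂ h) :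
      ContinuousOn (fun ζ => h ζ / φ ζ) (Rectangle z w \ {c}) :=
    hh.continuous.continuousOn.div hφ.continuous.continuousOn fun ζ hζ => hφne ζ hζ.1 hζ.2
  calc rectIntegral (fun ζ => g ζ / φ ζ) z w
      = rectIntegral (fun ζ => g ζ / φ ζ) z w -
          rectIntegral (fun ζ => dslope g c ζ / dslope φ c ζ) z w := by
        rw [rectIntegral_eq_zero hreg, sub_zero]
    _ = rectIntegral (fun ζ => g c * (1 / φ ζ)) z w := by
        rw [← rectIntegral_sub hc (hquot hg) (hreg.continuousOn.mono sdiff_subset)]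
        refine rectIntegral_congr hc fun ζ ⟨hζ, hζc⟩ => ?_
        have hφζ := hφne ζ hζ hζc
        have hsub : ζ - c ≠ 0 := sub_ne_zero.2 hζc
        simp only [dslope_of_ne _ hζc, slope_def_field, hφc, sub_zero]
        field_simp
        ring
    _ = g c * rectIntegral (fun ζ => 1 / φ ζ) z w := rectIntegral_const_mul _

end Rectangle

theorem tendsto_integral_vertical {f : ℂ → ℂ} {l : Filter ℝ} {L : ℂ}
    (hf : Tendsto f (comap re l ⊓ 𝓟 (im ⁻¹' Icc 0 1)) (𝓝 L))
    (hint : ∀ᶠ σ : ℝ in l, IntervalIntegrable (fun y : ℝ => f (σ + y * I)) volume 0 1) :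
    Tendsto (fun σ : ℝ => ∫ y in (0 : ℝ)..1, f (σ + y * I)) l (𝓝 L) := by
  rw [Metric.tendsto_nhds] at hf ⊢
  intro ε hε
  have hclose := eventually_comap.1 (eventually_inf_principal.1 (hf (ε / 2) (half_pos hε)))
  filter_upwards [hclose, hint] with σ hσ hσint
  have hbound : ∀ y ∈ Ι (0 : ℝ) 1, ‖f (σ + y * I) - L‖ ≤ ε / 2 := by
    intro y hy
    rw [uIoc_of_le zero_le_one] at hy
    exact (dist_eq_norm _ L ▸ hσ _ (by simp) (by simpa using Ioc_subset_Icc_self hy)).le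
  calc dist (∫ y in (0 : ℝ)..1, f (σ + y * I)) L
      = ‖∫ y in (0 : ℝ)..1, (f (σ + y * I) - L)‖ := by
        rw [dist_eq_norm, integral_sub hσint intervalIntegrable_const]
        simp
    _ ≤ ε / 2 * |1 - 0| := norm_integral_le_of_norm_le_const hbound
    _ < ε := by norm_num; linarith

theorem intervalIntegrable_vertical {f : ℂ → ℂ} {c : ℂ}
    (hf : ContinuousOn f (im ⁻¹' Icc 0 1 \ {c})) {σ : ℝ} (hσ : σ ≠ c.re) :
    IntervalIntegrable (fun y : ℝ => f (σ + y * I)) volume 0 1 := by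
  refine (hf.comp (by fun_prop : Continuous fun y : ℝ => (σ + y * I : ℂ)).continuousOn
    fun y hy => ⟨?_, ?_⟩).intervalIntegrable
  · simpa [uIcc_of_le zero_le_one] using hy
  · rintro rfl
    simp at hσ

def rotExp (φ : ℝ) (z : ℂ) : ℂ := cexp (π * z + φ * I)

section RotExp

variable {φ : ℝ}

theorem rotExp_eq_ofReal_mul (z : ℂ) :
    rotExp φ z = Real.exp (π * z.re) * cexp ((π * z.im + φ : ℝ) * I) := by
  rw [rotExp, ofReal_exp, ← exp_add]
  congr 1
  conv_lhs => rw [← re_add_im z]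
  push_cast
  ring

theorem rotExp_ofReal (x : ℝ) : rotExp φ x = Real.exp (π * x) * cexp (φ * I) := by
  simp [rotExp_eq_ofReal_mul]

theorem norm_rotExp (z : ℂ) : ‖rotExp φ z‖ = Real.exp (π * z.re) := by
  simp [rotExp, norm_exp]

theorem rotExp_ne_zero (φ : ℝ) (z : ℂ) : rotExp φ z ≠ 0 := exp_ne_zero _

theorem rotExp_add_I (z : ℂ) : rotExp φ (z + I) = -rotExp φ z := by
  rw [rotExp, rotExp, show π * (z + I) + φ * I = π * z + φ * I + π * I by ring, exp_add,
    exp_pi_mul_I, mul_neg_one]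

theorem rotExp_add_pi (φ : ℝ) (z : ℂ) : rotExp (φ + π) z = -rotExp φ z := by
  rw [rotExp, rotExp, ofReal_add, add_mul, ← add_assoc, exp_add, exp_pi_mul_I, mul_neg_one]

theorem rotExp_sub_pi (φ : ℝ) (z : ℂ) : rotExp (φ - π) z = -rotExp φ z := by
  rw [← neg_neg (rotExp (φ - π) z), ← rotExp_add_pi, sub_add_cancel]

theorem rotExp_neg (φ : ℝ) (z : ℂ) : rotExp φ (-z) = (rotExp (-φ) z)⁻¹ := by
  rw [rotExp, rotExp, ← exp_neg]
  push_cast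
  ring_nf

theorem hasDerivAt_rotExp (z : ℂ) : HasDerivAt (rotExp φ) (π * rotExp φ z) z := by
  have := (((hasDerivAt_id z).const_mul (π : ℂ)).add_const (φ * I : ℂ)).cexp
  simp only [id, mul_one] at this
  rw [mul_comm]
  exact this

theorem differentiable_rotExp : Differentiable ℂ (rotExp φ) :=
  fun z => (hasDerivAt_rotExp z).differentiableAt

/-- Rotating `1 - rotExp φ z` by `e^{-iψ}`, `ψ = π Im z + φ`, makes its imaginary part `-sin ψ`. -/
theorem abs_sin_le_norm_one_sub_rotExp (z : ℂ) :
    |Real.sin (π * z.im + φ)| ≤ ‖1 - rotExp φ z‖ := by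
  set ψ := π * z.im + φ
  have hrot : (1 - rotExp φ z) * cexp (↑(-ψ) * I) = cexp (↑(-ψ) * I) - Real.exp (π * z.re) := by
    rw [rotExp_eq_ofReal_mul, sub_mul, one_mul, mul_assoc, ← exp_add, ← add_mul, ← ofReal_add,
      add_neg_cancel, ofReal_zero, zero_mul, exp_zero, mul_one]
  calc |Real.sin ψ| = |((1 - rotExp φ z) * cexp (↑(-ψ) * I)).im| := by
        rw [hrot, sub_im, exp_ofReal_mul_I_im, ofReal_im, sub_zero, Real.sin_neg, abs_neg]
    _ ≤ ‖(1 - rotExp φ z) * cexp (↑(-ψ) * I)‖ := abs_im_le_norm _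
    _ = ‖1 - rotExp φ z‖ := by rw [norm_mul, norm_exp_ofReal_mul_I, mul_one]

theorem one_sub_rotExp_ne_zero_of_sin {z : ℂ} (h : Real.sin (π * z.im + φ) ≠ 0) :
    1 - rotExp φ z ≠ 0 :=
  norm_pos_iff.1 ((abs_pos.2 h).trans_le (abs_sin_le_norm_one_sub_rotExp z))

theorem norm_one_div_one_sub_rotExp_le {z : ℂ} (h : Real.sin (π * z.im + φ) ≠ 0) :
    ‖1 / (1 - rotExp φ z)‖ ≤ 1 / |Real.sin (π * z.im + φ)| := by
  rw [norm_div, norm_one]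
  exact one_div_le_one_div_of_le (abs_pos.2 h) (abs_sin_le_norm_one_sub_rotExp z)

theorem rotExp_eq_one_iff {z : ℂ} :
    rotExp φ z = 1 ↔ z.re = 0 ∧ ∃ n : ℤ, π * z.im + φ = 2 * π * n := by
  rw [rotExp, exp_eq_one_iff]
  constructor
  · rintro ⟨n, hn⟩
    have hre := congrArg re hn
    have him := congrArg im hn
    simp at hre him
    exact ⟨hre, n, by linarith⟩
  · rintro ⟨hre, n, hn⟩
    refine ⟨n, ?_⟩
    apply Complex.ext <;> simp [hre]
    linarith

theorem tendsto_rotExp_atBot : Tendsto (rotExp φ) (comap re atBot) (𝓝 0) := by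
  rw [tendsto_zero_iff_norm_tendsto_zero]
  simp_rw [norm_rotExp]
  exact Real.tendsto_exp_atBot.comp ((tendsto_const_mul_atBot_of_pos Real.pi_pos).2 tendsto_comap)

theorem tendsto_one_div_one_sub_rotExp_atBot :
    Tendsto (fun z => 1 / (1 - rotExp φ z)) (comap re atBot) (𝓝 1) := by
  have := (tendsto_const_nhds (x := (1 : ℂ))).sub (tendsto_rotExp_atBot (φ := φ))
  simpa using this.inv₀ (by norm_num)

theorem tendsto_one_div_one_sub_rotExp_atTop :
    Tendsto (fun z => 1 / (1 - rotExp φ z)) (comap re atTop) (𝓝 0) := by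
  have hexp : Tendsto (fun z : ℂ => Real.exp (π * z.re) - 1) (comap re atTop) atTop :=
    tendsto_atTop_add_const_right _ _ (Real.tendsto_exp_atTop.comp
      ((tendsto_const_mul_atTop_of_pos Real.pi_pos).2 tendsto_comap))
  have hnorm : Tendsto (fun z => ‖1 - rotExp φ z‖) (comap re atTop) atTop := by
    refine tendsto_atTop_mono (fun z => ?_) hexp
    rw [← norm_rotExp (φ := φ), norm_sub_rev]
    simpa using norm_sub_norm_le (rotExp φ z) 1
  simpa [Function.comp_def] using
    tendsto_inv₀_cobounded.comp (tendsto_norm_atTop_iff_cobounded.1 hnorm)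

end RotExp

def logRatio (w : ℂ) : ℂ := log (1 + w) - log (1 - w)

section LogRatio

variable {φ : ℝ}

theorem im_rotExp_ofReal_ne_zero (hφ : Real.sin φ ≠ 0) (x : ℝ) : (rotExp φ x).im ≠ 0 := by
  rw [rotExp_ofReal, im_ofReal_mul, exp_ofReal_mul_I_im]
  exact mul_ne_zero (Real.exp_ne_zero _) hφ

theorem one_add_rotExp_mem_slitPlane (hφ : Real.sin φ ≠ 0) (x : ℝ) :
    1 + rotExp φ x ∈ slitPlane :=
  mem_slitPlane_iff.2 (Or.inr (by simpa using im_rotExp_ofReal_ne_zero hφ x))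

theorem one_sub_rotExp_mem_slitPlane (hφ : Real.sin φ ≠ 0) (x : ℝ) :
    1 - rotExp φ x ∈ slitPlane :=
  mem_slitPlane_iff.2 (Or.inr (by simpa using im_rotExp_ofReal_ne_zero hφ x))

theorem hasDerivAt_logRatio_rotExp (hφ : Real.sin φ ≠ 0) (x : ℝ) :
    HasDerivAt (fun x : ℝ => logRatio (rotExp φ x) / π)
      (1 / (1 - rotExp φ x) - 1 / (1 + rotExp φ x)) x := by
  have hw : HasDerivAt (fun x : ℝ => rotExp φ x) (π * rotExp φ x) x :=
    (hasDerivAt_rotExp (x : ℂ)).comp_ofReal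
  have hadd := one_add_rotExp_mem_slitPlane hφ x
  have hsub := one_sub_rotExp_mem_slitPlane hφ x
  refine ((((hw.const_add 1).clog_real hadd).sub
    ((hw.const_sub 1).clog_real hsub)).div_const (π : ℂ)).congr_deriv ?_
  have := slitPlane_ne_zero hadd
  have := slitPlane_ne_zero hsub
  have : (π : ℂ) ≠ 0 := ofReal_ne_zero.2 Real.pi_ne_zero
  field_simp
  ring

theorem tendsto_logRatio_rotExp_atBot :
    Tendsto (fun x : ℝ => logRatio (rotExp φ x)) atBot (𝓝 0) := by
  have hw : Tendsto (fun x : ℝ => rotExp φ x) atBot (𝓝 0) :=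
    tendsto_rotExp_atBot.comp (tendsto_comap_iff.2 (by simp [Function.comp_def]; exact tendsto_id))
  have hcont : ContinuousAt logRatio 0 :=
    ((continuousAt_clog (by simp)).comp (continuousAt_const.add continuousAt_id)).sub
      ((continuousAt_clog (by simp)).comp (continuousAt_const.sub continuousAt_id))
  simpa [logRatio, Function.comp_def] using hcont.tendsto.comp hw

theorem log_sub_log_neg {c : ℂ} (hc : c.im < 0) : log c - log (-c) = -π * I := by
  apply Complex.ext <;> simp [log_re, log_im, arg_neg_eq_arg_add_pi_of_im_neg hc]

theorem tendsto_logRatio_rotExp_atTop (hφ : Real.sin φ < 0) :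
    Tendsto (fun x : ℝ => logRatio (rotExp φ x)) atTop (𝓝 (-π * I)) := by
  set c := cexp (φ * I)
  have hc : c.im < 0 := by rwa [exp_ofReal_mul_I_im]
  have hc₀ (t : ℝ) : (t : ℂ) + c ≠ 0 ∧ (t : ℂ) - c ≠ 0 := by
    constructor <;> intro h <;> have := congrArg im h <;> simp at this <;> linarith
  -- factoring `e^{πx}` out of `1 ± e^{πx} c` leaves arguments that tend to `± c`
  have hfactor (x : ℝ) : logRatio (rotExp φ x) =
      log (Real.exp (-(π * x)) + c) - log (Real.exp (-(π * x)) - c) := by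
    have hinv : (Real.exp (π * x) : ℂ) * Real.exp (-(π * x)) = 1 := by
      rw [← ofReal_mul, ← Real.exp_add, add_neg_cancel, Real.exp_zero, ofReal_one]
    have hadd : 1 + rotExp φ x = Real.exp (π * x) * (Real.exp (-(π * x)) + c) := by
      rw [rotExp_ofReal, mul_add, hinv]
    have hsub : 1 - rotExp φ x = Real.exp (π * x) * (Real.exp (-(π * x)) - c) := by
      rw [rotExp_ofReal, mul_sub, hinv]
    rw [logRatio, hadd, hsub, log_ofReal_mul (Real.exp_pos _) (hc₀ _).1,
      log_ofReal_mul (Real.exp_pos _) (hc₀ _).2]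
    ring
  have hρ : Tendsto (fun x : ℝ => ((Real.exp (-(π * x)) : ℝ) : ℂ)) atTop (𝓝 0) := by
    have := Real.tendsto_exp_atBot.comp
      (tendsto_neg_atTop_atBot.comp ((tendsto_const_mul_atTop_of_pos Real.pi_pos).2 tendsto_id))
    simpa using this.ofReal
  have hslit : c ∈ slitPlane ∧ -c ∈ slitPlane :=
    ⟨mem_slitPlane_iff.2 (Or.inr hc.ne), mem_slitPlane_iff.2 (Or.inr (by simpa using hc.ne))⟩
  have hcont : ContinuousAt (fun t => log (t + c) - log (t - c)) 0 :=
    ((continuousAt_clog (by simpa using hslit.1)).comp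
      (continuousAt_id.add continuousAt_const)).sub
      ((continuousAt_clog (by simpa using hslit.2)).comp (continuousAt_id.sub continuousAt_const))
  convert hcont.tendsto.comp hρ using 1
  · exact funext hfactor
  · simp [log_sub_log_neg hc]

theorem tendsto_integral_one_div_one_sub_rotExp_sub_one_add (hφ : Real.sin φ < 0) :
    Tendsto (fun X : ℝ =>
      (∫ x in -X..X, 1 / (1 - rotExp φ x)) - ∫ x in -X..X, 1 / (1 + rotExp φ x)) atTop
      (𝓝 (-I)) := by
  have hw : Continuous fun x : ℝ => rotExp φ x := by unfold rotExp; fun_prop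
  have hsub : Continuous fun x : ℝ => 1 / (1 - rotExp φ x) :=
    continuous_const.div (continuous_const.sub hw) fun x =>
      slitPlane_ne_zero (one_sub_rotExp_mem_slitPlane hφ.ne x)
  have hadd : Continuous fun x : ℝ => 1 / (1 + rotExp φ x) :=
    continuous_const.div (continuous_const.add hw) fun x =>
      slitPlane_ne_zero (one_add_rotExp_mem_slitPlane hφ.ne x)
  have hFTC (X : ℝ) :
      (∫ x in -X..X, 1 / (1 - rotExp φ x)) - ∫ x in -X..X, 1 / (1 + rotExp φ x) =
        logRatio (rotExp φ X) / π - logRatio (rotExp φ ↑(-X)) / π := by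
    rw [← integral_sub (hsub.intervalIntegrable _ _) (hadd.intervalIntegrable _ _)]
    exact integral_eq_sub_of_hasDerivAt (fun x _ => hasDerivAt_logRatio_rotExp hφ.ne x)
      ((hsub.sub hadd).intervalIntegrable _ _)
  simp_rw [hFTC]
  have := ((tendsto_logRatio_rotExp_atTop hφ).div_const (π : ℂ)).sub
    ((tendsto_logRatio_rotExp_atBot (φ := φ)).comp tendsto_neg_atTop_atBot |>.div_const (π : ℂ))
  have hval : -π * I / π - 0 / π = -I := by
    have : (π : ℂ) ≠ 0 := ofReal_ne_zero.2 Real.pi_ne_zero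
    simp [field]
  rwa [hval] at this

end LogRatio

def gaussExp (β γ : ℂ) (z : ℂ) : ℂ := cexp (β * z ^ 2 + γ * z)

section GaussExp

variable {β γ : ℂ}

theorem differentiable_gaussExp : Differentiable ℂ (gaussExp β γ) := by
  unfold gaussExp
  fun_prop

theorem gaussExp_add_I (β γ z : ℂ) :
    gaussExp β γ (z + I) = cexp (γ * I - β) * gaussExp β (γ + 2 * β * I) z := by
  rw [gaussExp, gaussExp, ← exp_add]
  congr 1
  linear_combination β * I_sq

theorem gaussExp_neg (β γ z : ℂ) : gaussExp β (-γ) (-z) = gaussExp β γ z := by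
  simp only [gaussExp, neg_sq, neg_mul_neg]

theorem tendsto_quadratic_atBot {a : ℝ} (ha : a < 0) (b c : ℝ) :
    Tendsto (fun t : ℝ => a * t ^ 2 + b * t + c) atTop atBot := by
  have hlin : Tendsto (fun t : ℝ => a * t + b) atTop atBot :=
    tendsto_atBot_add_const_right _ b ((tendsto_const_mul_atBot_of_neg ha).2 tendsto_id)
  exact (tendsto_atBot_add_const_right _ c (tendsto_id.atTop_mul_atBot₀ hlin)).congr
    fun t => by simp only [id]; ring

theorem norm_gaussExp_le {z : ℂ} (hz : z.im ∈ Icc (0 : ℝ) 1) :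
    ‖gaussExp β γ z‖ ≤
      Real.exp (β.re * |z.re| ^ 2 + (2 * |β.im| + |γ.re|) * |z.re| + (|β.re| + |γ.im|)) := by
  rw [gaussExp, norm_exp, Real.exp_le_exp]
  obtain ⟨hy0, hy1⟩ := hz
  have hre : (β * z ^ 2 + γ * z).re =
      β.re * (z.re ^ 2 - z.im ^ 2) - β.im * (2 * z.re * z.im) + γ.re * z.re - γ.im * z.im := by
    simp only [add_re, mul_re, sq, mul_im]
    ring
  rw [hre, sq_abs]
  have hy : |z.im| ≤ 1 := abs_le.2 ⟨by linarith, hy1⟩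
  have e1 : -(β.re * z.im ^ 2) ≤ |β.re| := by
    have hsq : z.im ^ 2 ≤ 1 := by nlinarith
    nlinarith [mul_nonneg (neg_le_iff_add_nonneg.1 (neg_abs_le β.re)) (sq_nonneg z.im),
      mul_le_mul_of_nonneg_left hsq (abs_nonneg β.re)]
  have e2 : -(β.im * (2 * z.re * z.im)) ≤ 2 * |β.im| * |z.re| := by
    have := neg_abs_le (β.im * (2 * z.re * z.im))
    rw [abs_mul, abs_mul, abs_mul, abs_two] at this
    nlinarith [mul_nonneg (abs_nonneg β.im) (abs_nonneg z.re)]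
  have e3 : γ.re * z.re ≤ |γ.re| * |z.re| := (le_abs_self _).trans (abs_mul _ _).le
  have e4 : -(γ.im * z.im) ≤ |γ.im| := by
    have := neg_abs_le (γ.im * z.im)
    rw [abs_mul] at this
    nlinarith [abs_nonneg γ.im]
  nlinarith

theorem tendsto_gaussExp (hβ : β.re < 0) :
    Tendsto (gaussExp β γ) (comap re (cocompact ℝ) ⊓ 𝓟 (im ⁻¹' Icc 0 1)) (𝓝 0) := by
  have habs : Tendsto (fun z : ℂ => |z.re|) (comap re (cocompact ℝ)) atTop :=
    tendsto_norm_cocompact_atTop.comp tendsto_comap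
  have hlim := Real.tendsto_exp_atBot.comp ((tendsto_quadratic_atBot hβ
    (2 * |β.im| + |γ.re|) (|β.re| + |γ.im|)).comp habs)
  exact squeeze_zero_norm' (eventually_inf_principal.2 (Eventually.of_forall
    fun z hz => norm_gaussExp_le hz)) (hlim.mono_left inf_le_left)

theorem integrable_gaussExp_mul (hβ : β.re < 0) (a : ℂ) {g : ℝ → ℂ} (hg : Continuous g) {C : ℝ}
    (hC : ∀ x, ‖g x‖ ≤ C) : Integrable fun x : ℝ => gaussExp β γ (x + a) * g x := by
  have hquad (x : ℝ) : gaussExp β γ (x + a) =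
      cexp (β * x ^ 2 + (2 * β * a + γ) * x + (β * a ^ 2 + γ * a)) := by
    rw [gaussExp]
    ring_nf
  simp_rw [hquad]
  exact (integrable_cexp_quadratic' hβ _ _).mul_bdd hg.aestronglyMeasurable (ae_of_all _ hC)

end GaussExp

def pole (θ : ℝ) : ℂ := (θ / π : ℝ) * I

def mordellKernel (θ : ℝ) (z : ℂ) : ℂ := 1 / (1 - rotExp (-θ) z) - 1 / (1 - rotExp θ z)

def mordellIntegrand (β γ : ℂ) (θ : ℝ) (z : ℂ) : ℂ := gaussExp β γ z * mordellKernel θ z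

theorem mordellKernel_pi_sub (θ : ℝ) (z : ℂ) :
    mordellKernel (π - θ) z = -mordellKernel θ (z + I) := by
  rw [mordellKernel, mordellKernel, rotExp_add_I, rotExp_add_I, neg_sub, rotExp_sub_pi,
    show π - θ = -θ + π by ring, rotExp_add_pi]
  ring

theorem one_div_one_sub_inv {w : ℂ} (hw₀ : w ≠ 0) (hw₁ : 1 - w ≠ 0) :
    1 / (1 - w⁻¹) = 1 - 1 / (1 - w) := by
  have : w - 1 ≠ 0 := by rwa [← neg_sub, neg_ne_zero]
  field_simp
  ring

theorem mordellKernel_neg {θ : ℝ} (hθ : Real.sin θ ≠ 0) (x : ℝ) :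
    mordellKernel θ (-x) = mordellKernel θ x := by
  have hne {φ : ℝ} (hφ : Real.sin φ ≠ 0) : 1 - rotExp φ x ≠ 0 :=
    one_sub_rotExp_ne_zero_of_sin (by simpa using hφ)
  rw [mordellKernel, mordellKernel, rotExp_neg, rotExp_neg, neg_neg,
    one_div_one_sub_inv (rotExp_ne_zero _ _) (hne hθ),
    one_div_one_sub_inv (rotExp_ne_zero _ _) (hne (φ := -θ) (by rwa [Real.sin_neg, neg_ne_zero]))]
  ring

section Strip

variable {β γ : ℂ} {θ : ℝ} (hθ0 : 0 < θ) (hθπ : θ < π)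
include hθ0 hθπ

theorem one_sub_rotExp_ne_zero_of_mem_strip {z : ℂ} (hz : z.im ∈ Icc (0 : ℝ) 1) :
    1 - rotExp θ z ≠ 0 := by
  rw [sub_ne_zero, ne_comm, Ne, rotExp_eq_one_iff]
  rintro ⟨-, n, hn⟩
  have h0 : (0 : ℝ) < n := by nlinarith [hz.1, Real.pi_pos]
  have h1 : (n : ℝ) < 1 := by nlinarith [hz.2, Real.pi_pos]
  norm_cast at h0 h1
  omega

theorem one_sub_rotExp_neg_ne_zero_of_mem_strip {z : ℂ} (hz : z.im ∈ Icc (0 : ℝ) 1)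
    (hne : z ≠ pole θ) : 1 - rotExp (-θ) z ≠ 0 := by
  rw [sub_ne_zero, ne_comm, Ne, rotExp_eq_one_iff]
  rintro ⟨hre, n, hn⟩
  have h0 : (-1 : ℝ) < n := by nlinarith [hz.1, Real.pi_pos]
  have h1 : (n : ℝ) < 1 := by nlinarith [hz.2, Real.pi_pos]
  norm_cast at h0 h1
  obtain rfl : n = 0 := by omega
  have him : z.im = θ / π := by
    push_cast at hn
    field_simp
    linarith
  exact hne (Complex.ext (by simp [pole, hre]) (by simp [pole, him]))

omit hθ0 hθπ in
theorem rotExp_neg_pole : rotExp (-θ) (pole θ) = 1 := by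
  rw [rotExp, pole, ← exp_zero]
  congr 1
  push_cast
  field_simp
  ring

theorem pole_mem_uIoo {X : ℝ} (hX : 0 < X) :
    pole θ ∈ uIoo (-X : ℂ).re (X + I : ℂ).re ×ℂ uIoo (-X : ℂ).im (X + I : ℂ).im := by
  have : θ / π < 1 := (div_lt_one Real.pi_pos).2 hθπ
  simp [pole, mem_reProdIm, uIoo, hX.le, hX, div_pos hθ0 Real.pi_pos, this]

omit hθ0 hθπ in
theorem rectangle_subset_strip (X : ℝ) : Rectangle (-X : ℂ) (X + I) ⊆ im ⁻¹' Icc 0 1 :=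
  fun z hz => by simpa [Rectangle, mem_reProdIm] using hz.2

theorem continuousOn_one_div_one_sub_rotExp_neg :
    ContinuousOn (fun z => 1 / (1 - rotExp (-θ) z)) (im ⁻¹' Icc 0 1 \ {pole θ}) :=
  continuousOn_const.div (continuous_const.sub differentiable_rotExp.continuous).continuousOn
    fun _ hz => one_sub_rotExp_neg_ne_zero_of_mem_strip hθ0 hθπ hz.1 hz.2

theorem continuousOn_mordellIntegrand :
    ContinuousOn (mordellIntegrand β γ θ) (im ⁻¹' Icc 0 1 \ {pole θ}) :=
  differentiable_gaussExp.continuous.continuousOn.mul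
    ((continuousOn_one_div_one_sub_rotExp_neg hθ0 hθπ).sub
      (continuousOn_const.div (continuous_const.sub differentiable_rotExp.continuous).continuousOn
        fun _ hz => one_sub_rotExp_ne_zero_of_mem_strip hθ0 hθπ hz.1))

/-- Only the first term of the kernel has a pole in the strip, at `pole θ`. -/
theorem rectIntegral_mordellIntegrand {X : ℝ} (hX : 0 < X) :
    rectIntegral (mordellIntegrand β γ θ) (-X) (X + I) =
      gaussExp β γ (pole θ) * rectIntegral (fun z => 1 / (1 - rotExp (-θ) z)) (-X) (X + I) := by
  have hc := pole_mem_uIoo hθ0 hθπ hX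
  have hstrip := rectangle_subset_strip X
  have hsplit : mordellIntegrand β γ θ = fun z =>
      gaussExp β γ z / (1 - rotExp (-θ) z) - gaussExp β γ z / (1 - rotExp θ z) := by
    ext z
    simp only [mordellIntegrand, mordellKernel, mul_sub, mul_one_div]
  have hdiv {φ : ℝ} (hφ : ∀ z ∈ Rectangle (-X : ℂ) (X + I) \ {pole θ}, 1 - rotExp φ z ≠ 0) :
      ContinuousOn (fun z => gaussExp β γ z / (1 - rotExp φ z))
        (Rectangle (-X : ℂ) (X + I) \ {pole θ}) :=
    differentiable_gaussExp.continuous.continuousOn.div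
      (continuous_const.sub differentiable_rotExp.continuous).continuousOn hφ
  have hderiv : deriv (fun z => 1 - rotExp (-θ) z) (pole θ) ≠ 0 := by
    rw [((hasDerivAt_rotExp (pole θ)).const_sub 1).deriv, rotExp_neg_pole, mul_one, neg_ne_zero]
    exact ofReal_ne_zero.2 Real.pi_ne_zero
  rw [hsplit, rectIntegral_sub hc
      (hdiv fun z hz => one_sub_rotExp_neg_ne_zero_of_mem_strip hθ0 hθπ (hstrip hz.1) hz.2)
      (hdiv fun z hz => one_sub_rotExp_ne_zero_of_mem_strip hθ0 hθπ (hstrip hz.1)),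
    rectIntegral_div_of_simple_zero (φ := fun z => 1 - rotExp (-θ) z) hc differentiable_gaussExp
      ((differentiable_const 1).sub differentiable_rotExp) (by rw [rotExp_neg_pole, sub_self])
      hderiv fun z hz hne => one_sub_rotExp_neg_ne_zero_of_mem_strip hθ0 hθπ (hstrip hz) hne,
    rectIntegral_eq_zero (f := fun z => gaussExp β γ z / (1 - rotExp θ z))
      (differentiable_gaussExp.differentiableOn.div
        ((differentiable_const 1).sub differentiable_rotExp).differentiableOn
        fun z hz => one_sub_rotExp_ne_zero_of_mem_strip hθ0 hθπ (hstrip hz)),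
    sub_zero]

end Strip

section Limits

variable {β γ : ℂ} {θ : ℝ}

theorem integrable_mordellIntegrand (hβ : β.re < 0) {y : ℝ} (h₁ : Real.sin (π * y + -θ) ≠ 0)
    (h₂ : Real.sin (π * y + θ) ≠ 0) :
    Integrable fun x : ℝ => mordellIntegrand β γ θ (x + y * I) := by
  have him (x : ℝ) : (x + y * I : ℂ).im = y := by simp
  refine integrable_gaussExp_mul hβ _ (g := fun x : ℝ => mordellKernel θ (x + y * I))
    ?_ (C := 1 / |Real.sin (π * y + -θ)| + 1 / |Real.sin (π * y + θ)|) fun x => ?_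
  · have hw {φ : ℝ} : Continuous fun x : ℝ => 1 - rotExp φ (x + y * I) := by
      unfold rotExp
      fun_prop
    exact (continuous_const.div hw fun x => one_sub_rotExp_ne_zero_of_sin (by rwa [him])).sub
      (continuous_const.div hw fun x => one_sub_rotExp_ne_zero_of_sin (by rwa [him]))
  · refine (norm_sub_le _ _).trans (add_le_add ?_ ?_)
    · simpa [him] using norm_one_div_one_sub_rotExp_le (z := x + y * I) (by rwa [him])
    · simpa [him] using norm_one_div_one_sub_rotExp_le (z := x + y * I) (by rwa [him])

theorem tendsto_mordellKernel_atTop : Tendsto (mordellKernel θ) (comap re atTop) (𝓝 0) := by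
  have := (tendsto_one_div_one_sub_rotExp_atTop (φ := -θ)).sub
    (tendsto_one_div_one_sub_rotExp_atTop (φ := θ))
  rwa [sub_zero] at this

theorem tendsto_mordellKernel_atBot : Tendsto (mordellKernel θ) (comap re atBot) (𝓝 0) := by
  have := (tendsto_one_div_one_sub_rotExp_atBot (φ := -θ)).sub
    (tendsto_one_div_one_sub_rotExp_atBot (φ := θ))
  rwa [sub_self] at this

variable (hθ0 : 0 < θ) (hθπ : θ < π)
include hθ0 hθπ

theorem tendsto_rectIntegral_mordellIntegrand (hβ : β.re < 0) :
    Tendsto (fun X : ℝ => rectIntegral (mordellIntegrand β γ θ) (-X) (X + I)) atTop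
      (𝓝 ((∫ x : ℝ, mordellIntegrand β γ θ x) - ∫ x : ℝ, mordellIntegrand β γ θ (x + I))) := by
  have hside {l : Filter ℝ} (hl : l ≤ cocompact ℝ)
      (hK : Tendsto (mordellKernel θ) (comap re l) (𝓝 0)) (hσ : ∀ᶠ σ in l, σ ≠ 0) :
      Tendsto (fun σ : ℝ => ∫ y in (0 : ℝ)..1, mordellIntegrand β γ θ (σ + y * I)) l (𝓝 0) := by
    refine tendsto_integral_vertical ?_ (hσ.mono fun σ hσ => intervalIntegrable_vertical
      (continuousOn_mordellIntegrand hθ0 hθπ) (by simpa [pole] using hσ))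
    have := ((tendsto_gaussExp (γ := γ) hβ).mono_left
      (inf_le_inf_right _ (comap_mono hl))).mul (hK.mono_left inf_le_left)
    rwa [mul_zero] at this
  have hsin : Real.sin θ ≠ 0 := (Real.sin_pos_of_pos_of_lt_pi hθ0 hθπ).ne'
  have hbot : Integrable fun x : ℝ => mordellIntegrand β γ θ x := by
    have h₁ : Real.sin (π * 0 + -θ) ≠ 0 := by simpa using hsin
    have h₂ : Real.sin (π * 0 + θ) ≠ 0 := by simpa using hsin
    simpa only [ofReal_zero, zero_mul, add_zero] using
      integrable_mordellIntegrand (γ := γ) hβ h₁ h₂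
  have htop : Integrable fun x : ℝ => mordellIntegrand β γ θ (x + I) := by
    have h₁ : Real.sin (π * 1 + -θ) ≠ 0 := by simpa [← sub_eq_add_neg] using hsin
    have h₂ : Real.sin (π * 1 + θ) ≠ 0 := by simpa [add_comm π] using hsin
    simpa only [ofReal_one, one_mul] using integrable_mordellIntegrand (γ := γ) hβ h₁ h₂
  have hright := hside atTop_le_cocompact tendsto_mordellKernel_atTop (eventually_ne_atTop 0)
  have hleft := (hside atBot_le_cocompact tendsto_mordellKernel_atBot
    (eventually_ne_atBot 0)).comp tendsto_neg_atTop_atBot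
  simp_rw [rectIntegral_neg_add_I]
  have := (((intervalIntegral_tendsto_integral hbot tendsto_neg_atTop_atBot tendsto_id).sub
    (intervalIntegral_tendsto_integral htop tendsto_neg_atTop_atBot tendsto_id)).add
    (hright.const_smul I)).sub (hleft.const_smul I)
  simpa using this

theorem tendsto_rectIntegral_one_div_one_sub_rotExp_neg :
    Tendsto (fun X : ℝ => rectIntegral (fun z => 1 / (1 - rotExp (-θ) z)) (-X) (X + I)) atTop
      (𝓝 (-2 * I)) := by
  have hsin : Real.sin (-θ) < 0 := by
    rw [Real.sin_neg, neg_lt_zero]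
    exact Real.sin_pos_of_pos_of_lt_pi hθ0 hθπ
  have hside {l : Filter ℝ} {L : ℂ}
      (hK : Tendsto (fun z => 1 / (1 - rotExp (-θ) z)) (comap re l) (𝓝 L))
      (hσ : ∀ᶠ σ in l, σ ≠ 0) :
      Tendsto (fun σ : ℝ => ∫ y in (0 : ℝ)..1, 1 / (1 - rotExp (-θ) (σ + y * I))) l (𝓝 L) :=
    tendsto_integral_vertical (hK.mono_left inf_le_left) (hσ.mono fun σ hσ =>
      intervalIntegrable_vertical (continuousOn_one_div_one_sub_rotExp_neg hθ0 hθπ)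
        (by simpa [pole] using hσ))
  have hright := hside tendsto_one_div_one_sub_rotExp_atTop (eventually_ne_atTop 0)
  have hleft := (hside tendsto_one_div_one_sub_rotExp_atBot (eventually_ne_atBot 0)).comp
    tendsto_neg_atTop_atBot
  simp_rw [rectIntegral_neg_add_I, rotExp_add_I, sub_neg_eq_add]
  have := ((tendsto_integral_one_div_one_sub_rotExp_sub_one_add hsin).add (hright.const_smul I)).sub
    (hleft.const_smul I)
  have hval : -I + I • (0 : ℂ) - I • (1 : ℂ) = -2 * I := by simp only [smul_eq_mul]; ring
  rwa [hval] at this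

end Limits

theorem integral_mordellIntegrand_sub_integral_add_I {β γ : ℂ} {θ : ℝ} (hβ : β.re < 0)
    (hθ0 : 0 < θ) (hθπ : θ < π) :
    (∫ x : ℝ, mordellIntegrand β γ θ x) - ∫ x : ℝ, mordellIntegrand β γ θ (x + I) =
      -2 * I * gaussExp β γ (pole θ) := by
  refine (tendsto_nhds_unique ((tendsto_rectIntegral_mordellIntegrand hθ0 hθπ hβ).congr' ?_)
    ((tendsto_rectIntegral_one_div_one_sub_rotExp_neg hθ0 hθπ).const_mul
      (gaussExp β γ (pole θ)))).trans (by ring)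
  filter_upwards [eventually_gt_atTop 0] with X hX using rectIntegral_mordellIntegrand hθ0 hθπ hX

section Hhat

variable (k r : ℤ) (τ u : ℂ)

theorem hhat_eq_integral :
    hhat k r τ u =
      I * ∫ x : ℝ, mordellIntegrand (π * k * τ * I / 2) (-π * k * u) (π * r / k) x := by
  unfold hhat
  congr 2
  ext x
  have hgauss : cexp (π * I * k * τ * x ^ 2 / 2) * cexp (-π * k * u * x) =
      gaussExp (π * k * τ * I / 2) (-π * k * u) x := by
    rw [gaussExp, ← exp_add]
    ring_nf
  have hminus : (π * x - π * I * r / k : ℂ) = π * x + ↑(-(π * r / k)) * I := by push_cast; ring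
  have hplus : (π * x + π * I * r / k : ℂ) = π * x + ↑(π * r / k) * I := by push_cast; ring
  rw [hminus, hplus, hgauss]
  rfl

theorem exp_mul_hhat_sub_add (hk : k ≠ 0) :
    cexp (-(π : ℂ) * I * k * u - π * I * k * τ / 2) * hhat k (k - r) τ (u + τ) =
      -I * ∫ x : ℝ, mordellIntegrand (π * k * τ * I / 2) (-π * k * u) (π * r / k) (x + I) := by
  have hθ : π * ((k - r : ℤ) : ℝ) / k = π - π * r / k := by
    have : (k : ℝ) ≠ 0 := Int.cast_ne_zero.2 hk
    push_cast
    field_simp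
  have hγ : (-π * k * u : ℂ) + 2 * (π * k * τ * I / 2) * I = -π * k * (u + τ) := by
    linear_combination (π * k * τ : ℂ) * I_sq
  have hc : (-π * k * u : ℂ) * I - π * k * τ * I / 2 = -π * I * k * u - π * I * k * τ / 2 := by
    ring
  have hshift (x : ℝ) : cexp (-(π : ℂ) * I * k * u - π * I * k * τ / 2) *
      mordellIntegrand (π * k * τ * I / 2) (-π * k * (u + τ)) (π - π * r / k) x =
      -mordellIntegrand (π * k * τ * I / 2) (-π * k * u) (π * r / k) (x + I) := by
    rw [mordellIntegrand, mordellIntegrand, mordellKernel_pi_sub, gaussExp_add_I, hγ, hc]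
    ring
  rw [hhat_eq_integral, hθ]
  calc _ = I * ∫ x : ℝ, cexp (-(π : ℂ) * I * k * u - π * I * k * τ / 2) *
        mordellIntegrand (π * k * τ * I / 2) (-π * k * (u + τ)) (π - π * r / k) x := by
        rw [MeasureTheory.integral_const_mul]
        ring
    _ = _ := by
        simp_rw [hshift, MeasureTheory.integral_neg]
        ring

theorem gaussExp_pole (hk : k ≠ 0) :
    gaussExp (π * k * τ * I / 2) (-π * k * u) (pole (π * r / k)) =
      cexp (-π * I * r * u - π * I * r ^ 2 * τ / (2 * k)) := by
  have : (k : ℂ) ≠ 0 := Int.cast_ne_zero.2 hk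
  have : (π : ℂ) ≠ 0 := ofReal_ne_zero.2 Real.pi_ne_zero
  rw [gaussExp, pole]
  congr 1
  push_cast
  field_simp
  linear_combination (r ^ 2 * τ : ℂ) * I_sq

theorem hhat_neg (hθ : Real.sin (π * r / k) ≠ 0) : hhat k r τ (-u) = hhat k r τ u := by
  rw [hhat_eq_integral, hhat_eq_integral, ← integral_neg_eq_self]
  congr 2
  ext x
  rw [mordellIntegrand, mordellIntegrand, ← mordellKernel_neg hθ, ofReal_neg,
    show (-π * k * -u : ℂ) = -(-π * k * u) by ring, gaussExp_neg, neg_neg]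

end Hhat

theorem hhat_shift_tau_and_even_general (k : ℤ) (r : ℤ) (hr1 : 1 ≤ r) (hr2 : r ≤ k - 1)
    (τ : ℂ) (hτ : 0 < τ.im) (u : ℂ) :
    hhat k r τ u +
        Complex.exp (-(Real.pi : ℂ) * Complex.I * (k : ℂ) * u -
            (Real.pi : ℂ) * Complex.I * (k : ℂ) * τ / 2) *
          hhat k (k - r) τ (u + τ) =
      2 * Complex.exp (-(Real.pi : ℂ) * Complex.I * (r : ℂ) * u -
        (Real.pi : ℂ) * Complex.I * (r : ℂ) ^ 2 * τ / (2 * (k : ℂ))) ∧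
    hhat k r τ u = hhat k r τ (-u) := by
  have hk : k ≠ 0 := by omega
  have hkpos : (0 : ℝ) < k := by exact_mod_cast (by omega : 0 < k)
  have hθ0 : 0 < π * r / k := by
    have : (0 : ℝ) < r := by exact_mod_cast hr1
    positivity
  have hθπ : π * r / k < π := by
    have : (r : ℝ) < k := by exact_mod_cast (by omega : r < k)
    rw [div_lt_iff₀ hkpos]
    nlinarith [Real.pi_pos]
  have hβ : (π * k * τ * I / 2 : ℂ).re < 0 := by
    simp
    nlinarith [mul_pos (mul_pos Real.pi_pos hkpos) hτ]
  refine ⟨?_, (hhat_neg k r τ u (Real.sin_pos_of_pos_of_lt_pi hθ0 hθπ).ne').symm⟩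
  rw [hhat_eq_integral, exp_mul_hhat_sub_add k r τ u hk, ← gaussExp_pole k r τ u hk]
  linear_combination I * integral_mordellIntegrand_sub_integral_add_I hβ hθ0 hθπ -
    2 * gaussExp (π * k * τ * I / 2) (-π * k * u) (pole (π * r / k)) * I_sq

/-- Proposition: ĥ_{k,r}(τ; u) + e^{−πiku − πikτ/2} ĥ_{k,k−r}(τ; u+τ) = 2 e^{−πiru − πir²τ/(2k)},
    and ĥ_{k,r}(τ; u) = ĥ_{k,r}(τ; −u). -/
theorem hhat_shift_tau_and_even (k : ℤ) (hk : 2 ≤ k) (r : ℤ) (hr1 : 1 ≤ r) (hr2 : r ≤ k - 1)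
    (τ : ℂ) (hτ : 0 < τ.im) (u : ℂ) :
    hhat k r τ u +
        Complex.exp (-(Real.pi : ℂ) * Complex.I * (k : ℂ) * u -
            (Real.pi : ℂ) * Complex.I * (k : ℂ) * τ / 2) *
          hhat k (k - r) τ (u + τ) =
      2 * Complex.exp (-(Real.pi : ℂ) * Complex.I * (r : ℂ) * u -
        (Real.pi : ℂ) * Complex.I * (r : ℂ) ^ 2 * τ / (2 * (k : ℂ))) ∧
    hhat k r τ u = hhat k r τ (-u) :=
  hhat_shift_tau_and_even_general k r hr1 hr2 τ hτ u

end DSLST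
end
end

section
/- For every integer k ≥ 2, every integer r, every τ in the upper half-plane and every u ∈ ℂ, the Wirtinger derivative of R̂_{k,r} with respect to ū satisfies ∂R̂_{k,r}(τ; u)/∂ū = i √(k/τ₂) e^{−πk u₂²/τ₂} [ ϑ_{k,r}(−τ̄; ū/2) − ϑ_{k,−r}(−τ̄; ū/2) ], where τ̄ and ū denote complex conjugates (so −τ̄ lies in the upper half-plane). -/
noncomputable section

open Complex MeasureTheory Matrix

/-!
Each term of `R̂` is `(sgn(n + 1/2) - E(aₙ)) · e^{-πin²τ/(2k) - πinu}` with `aₙ = (n + ku₂/τ₂)√(τ₂/k)`: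
a function of `u₂` times a holomorphic function of `u`. Hence `∂/∂ū` only sees `(i/2) ∂/∂u₂` of the
first factor, which is `-i√(k/τ₂) e^{-πaₙ²}` since `E' = 2e^{-πx²}`. Completing the square,
`e^{-πaₙ²} e^{-πin²τ/(2k) - πinu} = e^{-πku₂²/τ₂} e^{-πin²τ̄/(2k) - πinū}`, the term of index `-n` of
`ϑ_{k,·}(-τ̄; ū/2)`. Termwise differentiation is justified by a majorant on the unit ball about `u`:
for `|n|` large `n + 1/2` and `aₙ` have the same sign, so the first factor is at most `2e^{-πaₙ²}`
by the Gaussian tail bound, and the products are then dominated by the Jacobi theta bounds.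
-/

namespace DSLST

open Real Set ComplexConjugate

def gauss (x : ℝ) : ℝ := Real.exp (-π * x ^ 2)

lemma gauss_nonneg (x : ℝ) : 0 ≤ gauss x := (Real.exp_pos _).le

lemma continuous_gauss : Continuous gauss := by unfold gauss; fun_prop

lemma gauss_le_one (x : ℝ) : gauss x ≤ 1 :=
  Real.exp_le_one_iff.2 (by nlinarith [pi_pos, sq_nonneg x])

lemma gauss_neg (x : ℝ) : gauss (-x) = gauss x := by simp [gauss]

lemma integrable_gauss : Integrable gauss := integrable_exp_neg_mul_sq pi_pos

lemma integral_gauss : ∫ x, gauss x = 1 := by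
  unfold gauss
  rw [integral_gaussian, div_self pi_ne_zero, Real.sqrt_one]

lemma integral_Ioi_zero_gauss : ∫ x in Ioi 0, gauss x = 1 / 2 := by
  unfold gauss
  rw [integral_gaussian_Ioi, div_self pi_ne_zero, Real.sqrt_one]

lemma hasDerivAt_Efun (x : ℝ) : HasDerivAt Efun (2 * gauss x) x :=
  (continuous_gauss.integral_hasStrictDerivAt 0 x).hasDerivAt.const_mul 2

lemma Efun_neg (x : ℝ) : Efun (-x) = -Efun x := by
  have h := intervalIntegral.integral_comp_neg (a := 0) (b := x) gauss
  simp only [gauss_neg, neg_zero] at h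
  change 2 * ∫ t in (0:ℝ)..-x, gauss t = -(2 * ∫ t in (0:ℝ)..x, gauss t)
  rw [intervalIntegral.integral_symm, ← h]
  ring

lemma one_sub_Efun (x : ℝ) : 1 - Efun x = 2 * ∫ t in Ioi x, gauss t := by
  have h := intervalIntegral.integral_interval_add_Ioi (a := 0) (b := x)
    integrable_gauss.integrableOn integrable_gauss.integrableOn
  rw [integral_Ioi_zero_gauss] at h
  change 1 - 2 * ∫ t in (0:ℝ)..x, gauss t = _
  linarith

lemma integral_Ioi_gauss_le {x : ℝ} (hx : 0 ≤ x) : ∫ t in Ioi x, gauss t ≤ gauss x := by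
  have hshift : Integrable fun t => gauss x * gauss (t - x) :=
    (integrable_gauss.comp_sub_right x).const_mul _
  calc ∫ t in Ioi x, gauss t ≤ ∫ t in Ioi x, gauss x * gauss (t - x) := by
        refine setIntegral_mono_on integrable_gauss.integrableOn hshift.integrableOn
          measurableSet_Ioi fun t ht => ?_
        -- `t² ≥ x² + (t - x)²` for `0 ≤ x ≤ t`
        rw [gauss, gauss, gauss, ← Real.exp_add, Real.exp_le_exp]
        nlinarith [pi_pos, mul_nonneg hx (sub_nonneg.2 (le_of_lt ht))]
    _ ≤ ∫ t, gauss x * gauss (t - x) :=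
        setIntegral_le_integral hshift
          (.of_forall fun _ => mul_nonneg (gauss_nonneg x) (gauss_nonneg _))
    _ = gauss x := by
        rw [integral_const_mul, integral_sub_right_eq_self gauss x, integral_gauss, mul_one]

lemma abs_one_sub_Efun_le {x : ℝ} (hx : 0 ≤ x) : |1 - Efun x| ≤ 2 * gauss x := by
  have htail : 0 ≤ ∫ t in Ioi x, gauss t :=
    setIntegral_nonneg measurableSet_Ioi fun t _ => gauss_nonneg t
  rw [one_sub_Efun, abs_of_nonneg (by positivity)]
  linarith [integral_Ioi_gauss_le hx]

lemma abs_sign_sub_Efun_le (x : ℝ) : |Real.sign x - Efun x| ≤ 2 * gauss x := by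
  rcases lt_trichotomy x 0 with hx | rfl | hx
  · have h := abs_one_sub_Efun_le (neg_nonneg.2 hx.le)
    rw [Efun_neg, gauss_neg, ← abs_neg] at h
    rw [Real.sign_of_neg hx]
    convert h using 2
    ring
  · simp [Real.sign_zero, Efun, gauss]
  · rw [Real.sign_of_pos hx]
    exact abs_one_sub_Efun_le hx.le

def wirtingerBar (L : ℂ →L[ℝ] ℂ) : ℂ := (1 / 2) * (L 1 + I * L I)

lemma wirtingerBar_sub (L M : ℂ →L[ℝ] ℂ) :
    wirtingerBar (L - M) = wirtingerBar L - wirtingerBar M := by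
  simp only [wirtingerBar, _root_.sub_apply]; ring

lemma wirtingerBar_tsum {L : ℤ → ℂ →L[ℝ] ℂ} (hL : Summable L) :
    wirtingerBar (∑' m, L m) = ∑' m, wirtingerBar (L m) := by
  have h1 := hL.hasSum.mapL (ContinuousLinearMap.apply ℝ ℂ 1)
  have hI := hL.hasSum.mapL (ContinuousLinearMap.apply ℝ ℂ I)
  exact (((h1.add (hI.mul_left I)).mul_left (1 / 2)).tsum_eq).symm

def idImCLM (a b : ℂ) : ℂ →L[ℝ] ℂ :=
  a • ContinuousLinearMap.id ℝ ℂ + b • ofRealCLM.comp imCLM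

lemma idImCLM_apply (a b h : ℂ) : idImCLM a b h = a * h + b * h.im := by
  simp [idImCLM]

lemma norm_idImCLM_le (a b : ℂ) : ‖idImCLM a b‖ ≤ ‖a‖ + ‖b‖ := by
  refine ContinuousLinearMap.opNorm_le_bound _ (by positivity) fun h => ?_
  rw [idImCLM_apply, add_mul]
  refine (norm_add_le _ _).trans (add_le_add (norm_mul _ _).le ?_)
  rw [norm_mul, Complex.norm_real, Real.norm_eq_abs]
  exact mul_le_mul_of_nonneg_left (abs_im_le_norm h) (norm_nonneg b)

lemma wirtingerBar_idImCLM (a b : ℂ) : wirtingerBar (idImCLM a b) = I * b / 2 := by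
  simp only [wirtingerBar, idImCLM_apply, one_im, I_im, ofReal_zero, ofReal_one]
  linear_combination (1 / 2 * a) * I_sq

lemma hasFDerivAt_ofReal_comp_im_mul {f : ℝ → ℝ} {f' : ℝ} {B : ℂ → ℂ} {B' z : ℂ}
    (hf : HasDerivAt f f' z.im) (hB : HasDerivAt B B' z) :
    HasFDerivAt (fun w => (f w.im : ℂ) * B w) (idImCLM (f z.im * B') (f' * B z)) z := by
  have hA : HasFDerivAt (fun w : ℂ => (f w.im : ℂ)) (ofRealCLM.comp (f' • imCLM)) z :=
    ofRealCLM.hasFDerivAt.comp z (hf.comp_hasFDerivAt z imCLM.hasFDerivAt)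
  refine (hA.mul (hB.hasFDerivAt.restrictScalars ℝ)).congr_fderiv ?_
  ext1 h
  simp only [coe_smul, ContinuousLinearMap.comp_smulₛₗ, ringHom_apply, _root_.add_apply,
    _root_.smul_apply, ContinuousLinearMap.coe_restrictScalars',
    ContinuousLinearMap.toSpanSingleton_apply, smul_eq_mul, real_smul,
    ContinuousLinearMap.comp_apply, imCLM_apply, ofRealCLM_apply, idImCLM_apply]
  ring

def efArg (k n : ℤ) (τ : ℂ) (y : ℝ) : ℝ :=
  ((n : ℝ) + (k : ℝ) * y / τ.im) * √(τ.im / k)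

def sgnErr (k n : ℤ) (τ : ℂ) (y : ℝ) : ℝ :=
  Real.sign ((n : ℝ) + 1 / 2) - Efun (efArg k n τ y)

/-- `e^{-πin²τ/(2k) - πinz}`, written as a Jacobi theta term. -/
def holTerm (k n : ℤ) (τ z : ℂ) : ℂ := jacobiTheta₂_term n (-z / 2) (-τ / (2 * k))

lemma Rterm_eq (k : ℤ) (τ z : ℂ) (n : ℤ) :
    Rterm k τ z n = sgnErr k n τ z.im * holTerm k n τ z := by
  rw [Rterm, holTerm, jacobiTheta₂_term]
  congr 2
  ring

lemma hasDerivAt_efArg (k n : ℤ) (τ : ℂ) (y : ℝ) :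
    HasDerivAt (efArg k n τ) √(k / τ.im) y := by
  have hsqrt : √(τ.im / k) = (√(k / τ.im))⁻¹ := by rw [← Real.sqrt_inv, inv_div]
  refine ((((hasDerivAt_id y).const_mul (k : ℝ)).div_const τ.im).const_add (n : ℝ)).mul_const
    √(τ.im / k) |>.congr_deriv ?_
  rw [hsqrt, mul_one, ← div_eq_mul_inv, Real.div_sqrt]

lemma hasDerivAt_sgnErr (k n : ℤ) (τ : ℂ) (y : ℝ) :
    HasDerivAt (sgnErr k n τ) (-2 * √(k / τ.im) * gauss (efArg k n τ y)) y :=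
  ((hasDerivAt_Efun _).comp y (hasDerivAt_efArg k n τ y)).const_sub _ |>.congr_deriv (by ring)

lemma hasDerivAt_holTerm (k n : ℤ) (τ z : ℂ) :
    HasDerivAt (holTerm k n τ) (-π * I * n * holTerm k n τ z) z := by
  refine (((((hasDerivAt_neg z).div_const 2).const_mul (2 * π * I * n)).add_const
    (π * I * n ^ 2 * (-τ / (2 * k)))).cexp).congr_deriv ?_
  rw [holTerm, jacobiTheta₂_term]
  ring

def Rterm_fderiv (k : ℤ) (τ z : ℂ) (n : ℤ) : ℂ →L[ℝ] ℂ :=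
  idImCLM (sgnErr k n τ z.im * (-π * I * n * holTerm k n τ z))
    ((-2 * √(k / τ.im) * gauss (efArg k n τ z.im) : ℝ) * holTerm k n τ z)

lemma hasFDerivAt_Rterm (k : ℤ) (τ z : ℂ) (n : ℤ) :
    HasFDerivAt (fun w => Rterm k τ w n) (Rterm_fderiv k τ z n) z := by
  simp only [Rterm_eq]
  exact hasFDerivAt_ofReal_comp_im_mul (hasDerivAt_sgnErr k n τ z.im) (hasDerivAt_holTerm k n τ z)

lemma wirtingerBar_Rterm_fderiv (k : ℤ) (τ z : ℂ) (n : ℤ) :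
    wirtingerBar (Rterm_fderiv k τ z n)
      = -I * √(k / τ.im) * (gauss (efArg k n τ z.im) * holTerm k n τ z) := by
  rw [Rterm_fderiv, wirtingerBar_idImCLM]
  push_cast
  ring

lemma gauss_efArg_mul_holTerm {k : ℤ} (hk : 0 < k) {τ : ℂ} (hτ : 0 < τ.im) (n : ℤ)
    (z : ℂ) :
    gauss (efArg k n τ z.im) * holTerm k n τ z
      = cexp (-π * k * z.im ^ 2 / τ.im)
        * jacobiTheta₂_term (-n) (conj z / 2) (-conj τ / (2 * k)) := by
  have hk' : (0 : ℝ) < k := by exact_mod_cast hk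
  have hsq : efArg k n τ z.im ^ 2 = n ^ 2 * τ.im / k + 2 * n * z.im + k * z.im ^ 2 / τ.im := by
    rw [efArg, mul_pow, Real.sq_sqrt (by positivity)]
    field_simp
    ring
  rw [gauss, hsq, holTerm, jacobiTheta₂_term, jacobiTheta₂_term, ofReal_exp,
    ← Complex.exp_add, ← Complex.exp_add]
  congr 1
  have hconj : ∀ w : ℂ, conj w = w - 2 * w.im * I := fun w => by
    apply Complex.ext <;> simp; ring
  rw [hconj z, hconj τ]
  push_cast
  linear_combination (-(π * n ^ 2 * τ.im / k + 2 * π * n * z.im) : ℂ) * I_sq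

lemma im_div_two_mul_intCast (w : ℂ) (k : ℤ) : (w / (2 * k)).im = w.im / (2 * k) := by
  rw [show (2 * k : ℂ) = ((2 * k : ℤ) : ℂ) by push_cast; ring, div_intCast_im]
  push_cast
  ring

section Majorant

variable {k : ℤ} {τ u z : ℂ}

def cutoff (k : ℤ) (τ u : ℂ) : ℤ := ⌈k * (|u.im| + 1) / τ.im⌉

/-- Beyond the cutoff this is Mathlib's bound for `jacobiTheta₂_term` with
`S = (|u₂| + 1) / 2` and `T = τ₂ / (2k)`. -/
def majorant (k : ℤ) (τ u : ℂ) (n : ℤ) : ℝ :=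
  if |n| ≤ cutoff k τ u then
    Real.exp (π * (τ.im / (2 * k) * n ^ 2 + (|u.im| + 1) * |(n : ℝ)|))
  else Real.exp (-π * (τ.im / (2 * k) * n ^ 2 - 2 * ((|u.im| + 1) / 2) * |(n : ℝ)|))

lemma abs_im_le_of_mem_ball (hz : z ∈ Metric.ball u 1) : |z.im| ≤ |u.im| + 1 := by
  have h : |z.im - u.im| ≤ ‖z - u‖ := by rw [← sub_im]; exact abs_im_le_norm _
  rw [Metric.mem_ball, dist_eq_norm] at hz
  linarith [abs_sub_abs_le_abs_sub z.im u.im]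

lemma norm_holTerm_le (hz : z ∈ Metric.ball u 1) (n : ℤ) :
    ‖holTerm k n τ z‖
      ≤ Real.exp (π * (τ.im / (2 * k) * n ^ 2 + (|u.im| + 1) * |(n : ℝ)|)) := by
  rw [holTerm, norm_jacobiTheta₂_term, Real.exp_le_exp, im_div_two_mul_intCast]
  have h : n * z.im ≤ |(n : ℝ)| * (|u.im| + 1) :=
    (le_abs_self _).trans ((abs_mul _ _).trans_le
      (mul_le_mul_of_nonneg_left (abs_im_le_of_mem_ball hz) (abs_nonneg _)))
  simp only [neg_im, div_ofNat_im]
  have := mul_le_mul_of_nonneg_left h pi_pos.le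
  linear_combination this

lemma gauss_mul_norm_holTerm_le (hk : 0 < k) (hτ : 0 < τ.im) (hz : z ∈ Metric.ball u 1)
    (n : ℤ) :
    gauss (efArg k n τ z.im) * ‖holTerm k n τ z‖
      ≤ Real.exp (-π * (τ.im / (2 * k) * n ^ 2 - 2 * ((|u.im| + 1) / 2) * |(n : ℝ)|)) := by
  have hk' : (0 : ℝ) < k := by exact_mod_cast hk
  have hθ := norm_jacobiTheta₂_term_le (S := (|u.im| + 1) / 2) (T := τ.im / (2 * k))
    (z := conj z / 2) (τ := -conj τ / (2 * k)) (by positivity)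
    (by simp [abs_div]; linarith [abs_im_le_of_mem_ball hz])
    (by rw [im_div_two_mul_intCast]; simp) (-n)
  have hexp : ‖cexp (-π * k * z.im ^ 2 / τ.im)‖ ≤ 1 := by
    rw [show (-π * k * z.im ^ 2 / τ.im : ℂ) = ((-(π * k * z.im ^ 2 / τ.im) : ℝ) : ℂ) by
      push_cast; ring, norm_exp_ofReal, Real.exp_le_one_iff, neg_nonpos]
    positivity
  push_cast at hθ
  rw [neg_sq, abs_neg] at hθ
  rw [← Real.norm_of_nonneg (gauss_nonneg _), ← norm_real, ← norm_mul,
    gauss_efArg_mul_holTerm hk hτ, norm_mul]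
  exact (mul_le_of_le_one_left (norm_nonneg _) hexp).trans hθ

lemma abs_sign_le_one (x : ℝ) : |Real.sign x| ≤ 1 := by
  rcases Real.sign_apply_eq x with h | h | h <;> simp [h]

lemma sign_eq_sign_efArg (hk : 0 < k) (hτ : 0 < τ.im) (hz : z ∈ Metric.ball u 1) {n : ℤ}
    (hn : cutoff k τ u < |n|) : Real.sign ((n : ℝ) + 1 / 2) = Real.sign (efArg k n τ z.im) := by
  have hk' : (0 : ℝ) < k := by exact_mod_cast hk
  have hshift : |(k : ℝ) * z.im / τ.im| < |(n : ℝ)| := by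
    calc |(k : ℝ) * z.im / τ.im| = k * |z.im| / τ.im := by
          rw [abs_div, abs_mul, abs_of_pos hk', abs_of_pos hτ]
      _ ≤ k * (|u.im| + 1) / τ.im := by gcongr; exact abs_im_le_of_mem_ball hz
      _ ≤ cutoff k τ u := Int.le_ceil _
      _ < |(n : ℝ)| := by rw [← Int.cast_abs]; exact_mod_cast hn
  have hsqrt : 0 < √(τ.im / k) := Real.sqrt_pos.2 (by positivity)
  rw [efArg]
  rcases lt_or_ge n 0 with hneg | hpos
  · have hn1 : (n : ℝ) ≤ -1 := by exact_mod_cast (by omega : n ≤ -1)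
    rw [abs_of_neg (by exact_mod_cast hneg : (n : ℝ) < 0)] at hshift
    rw [Real.sign_of_neg (by linarith), Real.sign_of_neg (mul_neg_of_neg_of_pos ?_ hsqrt)]
    linarith [le_abs_self ((k : ℝ) * z.im / τ.im)]
  · have hn0 : (0 : ℝ) ≤ n := by exact_mod_cast hpos
    rw [abs_of_nonneg hn0] at hshift
    rw [Real.sign_of_pos (by linarith), Real.sign_of_pos (mul_pos ?_ hsqrt)]
    linarith [neg_abs_le ((k : ℝ) * z.im / τ.im)]

lemma abs_sgnErr_le_four (k n : ℤ) (τ : ℂ) (y : ℝ) : |sgnErr k n τ y| ≤ 4 := by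
  set a := efArg k n τ y
  have h₁ := abs_sub_le (Real.sign ((n : ℝ) + 1 / 2)) (Real.sign a) (Efun a)
  have h₂ := abs_sub (Real.sign ((n : ℝ) + 1 / 2)) (Real.sign a)
  rw [sgnErr]
  linarith [abs_sign_le_one ((n : ℝ) + 1 / 2), abs_sign_le_one a, abs_sign_sub_Efun_le a,
    gauss_le_one a]

lemma gauss_mul_norm_holTerm_le_majorant (hk : 0 < k) (hτ : 0 < τ.im) (hz : z ∈ Metric.ball u 1)
    (n : ℤ) : gauss (efArg k n τ z.im) * ‖holTerm k n τ z‖ ≤ majorant k τ u n := by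
  rw [majorant]
  split_ifs
  · exact (mul_le_of_le_one_left (norm_nonneg _) (gauss_le_one _)).trans (norm_holTerm_le hz n)
  · exact gauss_mul_norm_holTerm_le hk hτ hz n

lemma abs_sgnErr_mul_norm_holTerm_le_majorant (hk : 0 < k) (hτ : 0 < τ.im)
    (hz : z ∈ Metric.ball u 1) (n : ℤ) :
    |sgnErr k n τ z.im| * ‖holTerm k n τ z‖ ≤ 4 * majorant k τ u n := by
  rw [majorant]
  split_ifs with hn
  · exact mul_le_mul (abs_sgnErr_le_four k n τ z.im) (norm_holTerm_le hz n) (norm_nonneg _)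
      (by norm_num)
  · have hA : |sgnErr k n τ z.im| ≤ 2 * gauss (efArg k n τ z.im) := by
      rw [sgnErr, sign_eq_sign_efArg hk hτ hz (not_le.1 hn)]
      exact abs_sign_sub_Efun_le _
    have hB := gauss_mul_norm_holTerm_le hk hτ hz n
    have hY := Real.exp_pos (-π * (τ.im / (2 * k) * n ^ 2 - 2 * ((|u.im| + 1) / 2) * |(n : ℝ)|))
    linear_combination mul_le_mul_of_nonneg_right hA (norm_nonneg (holTerm k n τ z)) + 2 * hB
      + 2 * hY.le

lemma norm_Rterm_le_majorant (hk : 0 < k) (hτ : 0 < τ.im) (hz : z ∈ Metric.ball u 1) (n : ℤ) :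
    ‖Rterm k τ z n‖ ≤ 4 * majorant k τ u n := by
  rw [Rterm_eq, norm_mul, norm_real, Real.norm_eq_abs]
  exact abs_sgnErr_mul_norm_holTerm_le_majorant hk hτ hz n

lemma norm_Rterm_fderiv_le_majorant (hk : 0 < k) (hτ : 0 < τ.im) (hz : z ∈ Metric.ball u 1)
    (n : ℤ) : ‖Rterm_fderiv k τ z n‖
      ≤ 4 * π * |(n : ℝ)| * majorant k τ u n + 2 * √(k / τ.im) * majorant k τ u n := by
  refine (norm_idImCLM_le _ _).trans (add_le_add ?_ ?_)
  · have h := abs_sgnErr_mul_norm_holTerm_le_majorant hk hτ hz n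
    simp only [norm_mul, norm_neg, norm_real, Real.norm_eq_abs, norm_I, norm_intCast,
      abs_of_pos pi_pos, mul_one]
    linear_combination mul_le_mul_of_nonneg_left h (by positivity : 0 ≤ π * |(n : ℝ)|)
  · have h := gauss_mul_norm_holTerm_le_majorant hk hτ hz n
    simp only [norm_mul, norm_real, Real.norm_eq_abs, abs_neg, abs_two,
      abs_of_nonneg (Real.sqrt_nonneg _), abs_of_nonneg (gauss_nonneg _)]
    linear_combination mul_le_mul_of_nonneg_left h (by positivity : 0 ≤ 2 * √(k / τ.im))

lemma summable_pow_mul_majorant (hk : 0 < k) (hτ : 0 < τ.im) (u : ℂ) (j : ℕ) :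
    Summable fun n : ℤ => |(n : ℝ)| ^ j * majorant k τ u n := by
  have hk' : (0 : ℝ) < k := by exact_mod_cast hk
  refine (summable_pow_mul_jacobiTheta₂_term_bound ((|u.im| + 1) / 2)
    (T := τ.im / (2 * k)) (by positivity) j).congr_cofinite (Filter.eventually_cofinite.2 ?_)
  refine (Set.finite_Icc (-cutoff k τ u) (cutoff k τ u)).subset fun n hn => ?_
  by_contra hout
  rw [Set.mem_Icc, ← abs_le] at hout
  exact hn (by simp only [majorant, if_neg hout, Int.cast_abs])

end Majorant

section Series

variable {k : ℤ} {τ : ℂ}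

lemma summable_Rterm_fderiv_majorant (hk : 0 < k) (hτ : 0 < τ.im) (u : ℂ) :
    Summable fun n : ℤ =>
      4 * π * |(n : ℝ)| * majorant k τ u n + 2 * √(k / τ.im) * majorant k τ u n := by
  refine (((summable_pow_mul_majorant hk hτ u 1).mul_left (4 * π)).add
    ((summable_pow_mul_majorant hk hτ u 0).mul_left (2 * √(k / τ.im)))).congr fun n => ?_
  ring

lemma injective_add_two_mul (hk : 0 < k) (r : ℤ) :
    Function.Injective fun m : ℤ => r + 2 * k * m :=
  fun a b h => by simpa [hk.ne'] using h

lemma summable_Rterm_fderiv (hk : 0 < k) (hτ : 0 < τ.im) (r : ℤ) (u : ℂ) :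
    Summable fun m : ℤ => Rterm_fderiv k τ u (r + 2 * k * m) :=
  .of_norm_bounded ((summable_Rterm_fderiv_majorant hk hτ u).comp_injective
    (injective_add_two_mul hk r)) fun _ =>
      norm_Rterm_fderiv_le_majorant hk hτ (Metric.mem_ball_self one_pos) _

lemma hasFDerivAt_tsum_Rterm (hk : 0 < k) (hτ : 0 < τ.im) (r : ℤ) (u : ℂ) :
    HasFDerivAt (fun z => ∑' m : ℤ, Rterm k τ z (r + 2 * k * m))
      (∑' m : ℤ, Rterm_fderiv k τ u (r + 2 * k * m)) u := by
  have hu : u ∈ Metric.ball u 1 := Metric.mem_ball_self one_pos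
  have hRterm : Summable fun m : ℤ => Rterm k τ u (r + 2 * k * m) :=
    .of_norm_bounded ((((summable_pow_mul_majorant hk hτ u 0).mul_left 4).comp_injective
      (injective_add_two_mul hk r))) fun m => by
        simpa using norm_Rterm_le_majorant hk hτ hu (r + 2 * k * m)
  exact hasFDerivAt_tsum_of_isPreconnected
    ((summable_Rterm_fderiv_majorant hk hτ u).comp_injective (injective_add_two_mul hk r))
    Metric.isOpen_ball (convex_ball u 1).isPreconnected
    (fun _ z _ => hasFDerivAt_Rterm k τ z _)
    (fun _ z hz => norm_Rterm_fderiv_le_majorant hk hτ hz _) hu hRterm hu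

lemma thetaLvl_eq_tsum_jacobiTheta₂_term (k r : ℤ) (τ z : ℂ) :
    thetaLvl k r τ z = ∑' m : ℤ, jacobiTheta₂_term (r + 2 * k * m) z (τ / (2 * k)) := by
  refine tsum_congr fun m => ?_
  rw [jacobiTheta₂_term]
  push_cast
  ring_nf

lemma wirtingerBar_tsum_Rterm_fderiv (hk : 0 < k) (hτ : 0 < τ.im) (r : ℤ) (u : ℂ) :
    wirtingerBar (∑' m : ℤ, Rterm_fderiv k τ u (r + 2 * k * m))
      = -I * √(k / τ.im) * cexp (-π * k * u.im ^ 2 / τ.im)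
        * thetaLvl k (-r) (-conj τ) (conj u / 2) := by
  rw [wirtingerBar_tsum (summable_Rterm_fderiv hk hτ r u), thetaLvl_eq_tsum_jacobiTheta₂_term,
    ← (Equiv.neg ℤ).tsum_eq, ← tsum_mul_left]
  refine tsum_congr fun m => ?_
  rw [wirtingerBar_Rterm_fderiv, gauss_efArg_mul_holTerm hk hτ, Equiv.neg_apply,
    show -(r + 2 * k * -m) = -r + 2 * k * m by ring]
  ring

end Series

/-- The Wirtinger derivative ∂/∂ū of R̂_{k,r}(τ; ·). -/
theorem Rhat_dzbar (k : ℤ) (hk : 2 ≤ k) (r : ℤ) (τ : ℂ) (hτ : 0 < τ.im) (u : ℂ) :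
    dzbar (fun z => Rhat k r τ z) u =
      Complex.I * ((Real.sqrt ((k : ℝ) / τ.im) : ℝ) : ℂ) *
        Complex.exp (-(Real.pi : ℂ) * (k : ℂ) * (u.im : ℂ) ^ 2 / (τ.im : ℂ)) *
        (thetaLvl k r (-(starRingEnd ℂ τ)) ((starRingEnd ℂ u) / 2) -
          thetaLvl k (-r) (-(starRingEnd ℂ τ)) ((starRingEnd ℂ u) / 2)) := by
  have hk' : 0 < k := by omega
  have hR : HasFDerivAt (fun z => Rhat k r τ z)
      ((∑' m : ℤ, Rterm_fderiv k τ u (r + 2 * k * m))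
        - ∑' m : ℤ, Rterm_fderiv k τ u (-r + 2 * k * m)) u :=
    (hasFDerivAt_tsum_Rterm hk' hτ r u).sub (hasFDerivAt_tsum_Rterm hk' hτ (-r) u)
  rw [show dzbar (fun z => Rhat k r τ z) u = wirtingerBar (fderiv ℝ (fun z => Rhat k r τ z) u)
    from rfl, hR.fderiv, wirtingerBar_sub, wirtingerBar_tsum_Rterm_fderiv hk' hτ,
    wirtingerBar_tsum_Rterm_fderiv hk' hτ, neg_neg]
  ring

end DSLST
end
end
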